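/- Let f be a feasible integer flow of a network. There exists a feasible integer flow f' with f' ≠ f if and only if the residual graph D_f contains a proper directed cycle. -/

import Mathlib

open scoped Classical
noncomputable section

/-- A network: finite directed graph with arc set `A`, lower/upper capacities `l`, `u`,
node balances `b` and arc costs `c`. -/
structure Network (V : Type) [Fintype V] [DecidableEq V] where
  A : Finset (V × V)
  l : V × V → ℤ
  u : V × V → ℤ
  b : V → ℤ
  c : V × V → ℝ

variable {V : Type} [Fintype V] [DecidableEq V]

namespace Network

/-- No anti-parallel arcs, and `0 ≤ l ≤ u` on every arc. -/
def Wellformed (N : Network V) : Prop :=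
  (∀ a ∈ N.A, (a.2, a.1) ∉ N.A) ∧ ∀ a ∈ N.A, 0 ≤ N.l a ∧ N.l a ≤ N.u a

/-- A feasible integer flow: capacity constraints, vanishing outside `A`, flow balance. -/
def Feasible (N : Network V) (f : V × V → ℤ) : Prop :=
  (∀ a ∈ N.A, N.l a ≤ f a ∧ f a ≤ N.u a) ∧
  (∀ a, a ∉ N.A → f a = 0) ∧
  ∀ i : V, ((∑ a ∈ N.A.filter fun a => a.1 = i, f a)
         - ∑ a ∈ N.A.filter fun a => a.2 = i, f a) = N.b i

/-- The cost of a flow. -/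
def cost (N : Network V) (f : V × V → ℤ) : ℝ := ∑ a ∈ N.A, N.c a * (f a : ℝ)

/-- A flow is optimal if it is feasible of minimum cost. -/
def Optimal (N : Network V) (f : V × V → ℤ) : Prop :=
  N.Feasible f ∧ ∀ g, N.Feasible g → N.cost f ≤ N.cost g

/-- The arc set `A_f` of the residual graph `D_f`. -/
def resArcs (N : Network V) (f : V × V → ℤ) : Finset (V × V) :=
  N.A.filter (fun a => f a < N.u a) ∪ (N.A.filter fun a => N.l a < f a).image Prod.swap

/-- Residual cost of a residual arc: `c_{ij}` on forward arcs, `-c_{ji}` on backward arcs. -/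
def resCost (N : Network V) (a : V × V) : ℝ :=
  if a ∈ N.A then N.c a else -N.c (a.2, a.1)

/-- Residual capacity of a residual arc. -/
def resCap (N : Network V) (f : V × V → ℤ) (a : V × V) : ℤ :=
  if a ∈ N.A then N.u a - f a else f (a.2, a.1) - N.l (a.2, a.1)

/-- Reduced cost of an arc of `A` w.r.t. node potentials `y`. -/
def redCost (N : Network V) (y : V → ℝ) (a : V × V) : ℝ := N.c a + y a.1 - y a.2

/-- Residual reduced cost of a residual arc w.r.t. node potentials `y`. -/
def resRedCost (N : Network V) (y : V → ℝ) (a : V × V) : ℝ := N.resCost a + y a.1 - y a.2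

/-- `y` is an optimal node potential for `f`. -/
def OptPotential (N : Network V) (f : V × V → ℤ) (y : V → ℝ) : Prop :=
  ∀ a ∈ N.resArcs f, 0 ≤ N.resRedCost y a

end Network

/-- A (simple, directed) cycle: a nonempty duplicate-free list of at least two vertices,
traversed cyclically. -/
structure Cyc (V : Type) where
  verts : List V
  nodup : verts.Nodup
  two_le : 2 ≤ verts.length

/-- The arcs of a cycle: consecutive (cyclic) pairs of vertices. -/
def Cyc.arcs (C : Cyc V) : Finset (V × V) :=
  (C.verts.zip (C.verts.rotate 1)).toFinset

/-- A cycle is proper if it contains no pair of anti-parallel arcs. -/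
def Cyc.Proper (C : Cyc V) : Prop := ∀ a ∈ C.arcs, (a.2, a.1) ∉ C.arcs

/-- The incidence vector `χ(C)` of a cycle. -/
def Cyc.chi (C : Cyc V) : V × V → ℤ :=
  fun a => if a ∈ C.arcs then 1 else if (a.2, a.1) ∈ C.arcs then -1 else 0

namespace Network

/-- `C` is a directed cycle of the residual graph `D_f`. -/
def IsResCycle (N : Network V) (f : V × V → ℤ) (C : Cyc V) : Prop :=
  ∀ a ∈ C.arcs, a ∈ N.resArcs f

/-- The cost `c(f,C)` of a cycle in the residual graph. -/
def cycCost (N : Network V) (C : Cyc V) : ℝ := ∑ a ∈ C.arcs, N.resCost a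

end Network

namespace Network

/-- The incidence vector `χ(C) ∈ {−1,0,1}^A` of a residual cycle, as a vector indexed by
the arcs of the network (zero outside `A`). -/
def chi (N : Network V) (C : Cyc V) : V × V → ℤ :=
  fun a => if a ∈ N.A then C.chi a else 0

end Network

/-!
Two feasible flows differ by a circulation `g = f' - f` supported on the arcs. Its net flow
`g a - g a.swap` is skew-symmetric and conserved at every node, so every arc of positive net flow
is followed by another one, and on finitely many nodes these arcs contain a cycle. The cycle is
proper by skew-symmetry and residual because `f'` respects the capacities.

Conversely, adding the incidence vector `χ(C)` of a proper residual cycle `C` keeps the flow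
feasible. As there are no anti-parallel arcs, the net flow of `χ(C)` is the skew-symmetric
incidence vector `C.chi` of the cycle, which is conserved because a cycle leaves each node as
often as it enters it.
-/

open Finset Function

theorem List.Nodup.zip_rotate {α : Type*} {l : List α} (h : l.Nodup) (n : ℕ) :
    (l.zip (l.rotate n)).Nodup :=
  .of_map Prod.fst <| by rw [List.map_fst_zip (by simp)]; exact h

theorem Function.exists_iterate_mem_periodicPts {α : Type*} [Finite α] (g : α → α) (x : α) :
    ∃ m, g^[m] x ∈ periodicPts g := by
  obtain ⟨m, n, hmn, h⟩ := Finite.exists_ne_map_eq_of_infinite (g^[·] x)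
  wlog hlt : m < n generalizing m n
  · exact this n m hmn.symm h.symm (by omega)
  refine ⟨m, n - m, by omega, ?_⟩
  rw [IsPeriodicPt, IsFixedPt, ← iterate_add_apply, Nat.sub_add_cancel hlt.le]
  exact h.symm

namespace Cyc

section
omit [Fintype V]

theorem arcs_nonempty (C : Cyc V) : C.arcs.Nonempty := by
  obtain ⟨x, y, t, ht⟩ : ∃ x y t, C.verts = x :: y :: t := by
    match h : C.verts, C.two_le with
    | x :: y :: t, _ => exact ⟨x, y, t, rfl⟩
  exact ⟨(x, y), by simp [arcs, ht]⟩

theorem card_filter_fst_eq_card_filter_snd (C : Cyc V) (i : V) :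
    #(C.arcs.filter fun a => a.1 = i) = #(C.arcs.filter fun a => a.2 = i) := by
  simp only [arcs, List.filter_toFinset,
    List.toFinset_card_of_nodup ((C.nodup.zip_rotate 1).filter _), ← List.countP_eq_length_filter]
  have hfst := List.countP_map (p := fun v => decide (v = i)) (f := Prod.fst)
    (l := C.verts.zip (C.verts.rotate 1))
  have hsnd := List.countP_map (p := fun v => decide (v = i)) (f := Prod.snd)
    (l := C.verts.zip (C.verts.rotate 1))
  rw [List.map_fst_zip (by simp)] at hfst
  rw [List.map_snd_zip (by simp), (List.rotate_perm _ 1).countP_eq] at hsnd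
  exact hfst.symm.trans hsnd

def ofPeriodicPt (g : V → V) (x : V) (hx : 2 ≤ minimalPeriod g x) : Cyc V where
  verts := (List.range (minimalPeriod g x)).map (g^[·] x)
  nodup := Cycle.nodup_coe_iff.mp nodup_periodicOrbit
  two_le := by simpa using hx

theorem mem_arcs_ofPeriodicPt {g : V → V} {x : V} {hx : 2 ≤ minimalPeriod g x} {a : V × V}
    (ha : a ∈ (ofPeriodicPt g x hx).arcs) : ∃ n, a = (g^[n] x, g (g^[n] x)) := by
  obtain ⟨k, hk, rfl⟩ := List.mem_iff_getElem.mp (List.mem_toFinset.mp ha)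
  refine ⟨k, ?_⟩
  simp [ofPeriodicPt, List.getElem_rotate, iterate_mod_minimalPeriod_eq, iterate_succ_apply']

end

/-- Following a successor from every head, a walk in `H` must close up on a finite vertex set. -/
theorem exists_of_forall_exists_succ {H : Set (V × V)} (hne : H.Nonempty)
    (hloop : ∀ a ∈ H, a.1 ≠ a.2) (hsucc : ∀ a ∈ H, ∃ b ∈ H, b.1 = a.2) :
    ∃ C : Cyc V, ∀ a ∈ C.arcs, a ∈ H := by
  obtain ⟨a₀, ha₀⟩ := hne
  have hnext : ∀ v, ∃ w, (∃ u, (u, v) ∈ H) → (v, w) ∈ H := by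
    intro v
    by_cases hv : ∃ u, (u, v) ∈ H
    · obtain ⟨u, hu⟩ := hv
      obtain ⟨b, hb, rfl⟩ := hsucc _ hu
      exact ⟨b.2, fun _ => hb⟩
    · exact ⟨v, fun h => absurd h hv⟩
  choose next hnext using hnext
  have hwalk : ∀ n, (next^[n] a₀.2, next (next^[n] a₀.2)) ∈ H := by
    intro n
    induction n with
    | zero => exact hnext _ ⟨a₀.1, ha₀⟩
    | succ n ih => rw [iterate_succ_apply']; exact hnext _ ⟨_, ih⟩
  obtain ⟨m, hm⟩ := exists_iterate_mem_periodicPts next a₀.2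
  have hper : 2 ≤ minimalPeriod next (next^[m] a₀.2) := by
    have h0 := minimalPeriod_pos_of_mem_periodicPts hm
    have h1 : minimalPeriod next (next^[m] a₀.2) ≠ 1 := fun h =>
      hloop _ (hwalk m) (minimalPeriod_eq_one_iff_isFixedPt.mp h).symm
    omega
  refine ⟨ofPeriodicPt next _ hper, fun a ha => ?_⟩
  obtain ⟨n, rfl⟩ := mem_arcs_ofPeriodicPt ha
  rw [← iterate_add_apply]
  exact hwalk (n + m)

end Cyc

section
omit [Fintype V] [DecidableEq V]

def netFlow (g : V × V → ℤ) (a : V × V) : ℤ := g a - g a.swap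

theorem netFlow_swap (g : V × V → ℤ) (a : V × V) : netFlow g a.swap = -netFlow g a :=
  (neg_sub _ _).symm

theorem netFlow_eq_zero_of_fst_eq_snd (g : V × V → ℤ) {a : V × V} (ha : a.1 = a.2) :
    netFlow g a = 0 := by
  rw [netFlow, show a.swap = a from Prod.ext ha.symm ha, sub_self]

end

theorem exists_proper_cyc_of_netFlow_ne_zero {g : V × V → ℤ}
    (hcirc : ∀ i, ∑ j, netFlow g (i, j) = 0) (hne : ∃ a, netFlow g a ≠ 0) :
    ∃ C : Cyc V, (∀ a ∈ C.arcs, 0 < netFlow g a) ∧ C.Proper := by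
  have hsucc : ∀ a, 0 < netFlow g a → ∃ b, 0 < netFlow g b ∧ b.1 = a.2 := by
    intro a ha
    have hback : netFlow g (a.2, a.1) ≠ 0 := by
      rw [show (a.2, a.1) = a.swap from rfl, netFlow_swap]; omega
    obtain ⟨j, -, hj⟩ := exists_pos_of_sum_zero_of_exists_nonzero _ (hcirc a.2)
      ⟨a.1, mem_univ _, hback⟩
    exact ⟨(a.2, j), hj, rfl⟩
  obtain ⟨a, ha⟩ := hne
  have hpos : ∃ a, 0 < netFlow g a := by
    rcases ha.lt_or_gt with h | h
    · exact ⟨a.swap, by rw [netFlow_swap]; omega⟩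
    · exact ⟨a, h⟩
  obtain ⟨C, hC⟩ := Cyc.exists_of_forall_exists_succ (H := {a | 0 < netFlow g a}) hpos
    (fun a (ha : 0 < netFlow g a) hdiag => ha.ne' (netFlow_eq_zero_of_fst_eq_snd g hdiag))
    (fun a ha => by simpa [and_comm] using hsucc a ha)
  refine ⟨C, hC, fun a ha ha' => ?_⟩
  have h1 : 0 < netFlow g a := hC a ha
  have h2 : 0 < netFlow g a.swap := hC _ ha'
  rw [netFlow_swap] at h2
  omega

def netOutflow (A : Finset (V × V)) (g : V × V → ℤ) (i : V) : ℤ :=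
  (∑ a ∈ A.filter fun a => a.1 = i, g a) - ∑ a ∈ A.filter fun a => a.2 = i, g a

section
omit [Fintype V]

theorem netOutflow_sub (A : Finset (V × V)) (g g' : V × V → ℤ) (i : V) :
    netOutflow A (g - g') i = netOutflow A g i - netOutflow A g' i := by
  simp only [netOutflow, Pi.sub_apply, sum_sub_distrib]
  ring

theorem netOutflow_add (A : Finset (V × V)) (g g' : V × V → ℤ) (i : V) :
    netOutflow A (g + g') i = netOutflow A g i + netOutflow A g' i := by
  simp only [netOutflow, Pi.add_apply, sum_add_distrib]
  ring

end

theorem netOutflow_eq_sum_netFlow {A : Finset (V × V)} {g : V × V → ℤ}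
    (hg : ∀ a ∉ A, g a = 0) (i : V) : netOutflow A g i = ∑ j, netFlow g (i, j) := by
  have hsupp : ∀ p : V × V → Prop, [DecidablePred p] →
      ∑ a ∈ A, (if p a then g a else 0) = ∑ a, if p a then g a else 0 := fun p _ =>
    sum_subset (subset_univ A) fun a _ ha => by simp [hg a ha]
  have hout : ∑ a ∈ A.filter (fun a => a.1 = i), g a = ∑ j, g (i, j) := by
    rw [sum_filter, hsupp, Fintype.sum_prod_type, sum_comm]
    simp
  have hin : ∑ a ∈ A.filter (fun a => a.2 = i), g a = ∑ j, g (j, i) := by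
    rw [sum_filter, hsupp, Fintype.sum_prod_type_right, sum_comm]
    simp
  rw [netOutflow, hout, hin, ← sum_sub_distrib]
  rfl
namespace Cyc

omit [Fintype V] in
theorem chi_eq_netFlow {C : Cyc V} (hC : C.Proper) :
    C.chi = netFlow fun a => if a ∈ C.arcs then 1 else 0 := by
  funext a
  by_cases h : a ∈ C.arcs
  · simp [chi, netFlow, Prod.swap, h, hC a h]
  · by_cases h' : a.swap ∈ C.arcs <;> simp_all [chi, netFlow, Prod.swap]

theorem sum_chi_eq_zero {C : Cyc V} (hC : C.Proper) (i : V) : ∑ j, C.chi (i, j) = 0 := by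
  rw [chi_eq_netFlow hC, ← netOutflow_eq_sum_netFlow (A := C.arcs) fun a ha => if_neg ha,
    netOutflow, sum_ite_of_true (fun a ha => (mem_filter.1 ha).1),
    sum_ite_of_true (fun a ha => (mem_filter.1 ha).1)]
  simp [card_filter_fst_eq_card_filter_snd]

end Cyc

namespace Network

variable {N : Network V} {f f' : V × V → ℤ} {C : Cyc V}

theorem mem_resArcs {a : V × V} :
    a ∈ N.resArcs f ↔ (a ∈ N.A ∧ f a < N.u a) ∨ (a.swap ∈ N.A ∧ N.l a.swap < f a.swap) := by
  obtain ⟨i, j⟩ := a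
  simp [resArcs]

theorem Feasible.mem_of_ne (hf : N.Feasible f) (hf' : N.Feasible f') {a : V × V}
    (h : f a ≠ f' a) : a ∈ N.A := by
  by_contra hA
  exact h (by rw [hf.2.1 a hA, hf'.2.1 a hA])

theorem mem_resArcs_of_netFlow_pos (hf : N.Feasible f) (hf' : N.Feasible f') {a : V × V}
    (ha : 0 < netFlow (f' - f) a) : a ∈ N.resArcs f := by
  rw [mem_resArcs]
  simp only [netFlow, Pi.sub_apply] at ha
  by_cases hlt : f a < f' a
  · have hA := hf.mem_of_ne hf' hlt.ne
    exact .inl ⟨hA, hlt.trans_le (hf'.1 a hA).2⟩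
  · have hlt' : f' a.swap < f a.swap := by omega
    have hA := hf.mem_of_ne hf' hlt'.ne'
    exact .inr ⟨hA, (hf'.1 _ hA).1.trans_lt hlt'⟩

theorem netFlow_chi (hN : ∀ a ∈ N.A, a.swap ∉ N.A) (hC : N.IsResCycle f C) (hCp : C.Proper) :
    netFlow (N.chi C) = C.chi := by
  funext a
  simp only [netFlow, Network.chi]
  by_cases ha : a ∈ N.A
  · rw [if_pos ha, if_neg (hN a ha), sub_zero]
  by_cases ha' : a.swap ∈ N.A
  · rw [if_neg ha, if_pos ha', zero_sub, Cyc.chi_eq_netFlow hCp, netFlow_swap, neg_neg]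
  have hres : ∀ b ∈ C.arcs, b ∈ N.A ∨ b.swap ∈ N.A := fun b hb =>
    (mem_resArcs.1 (hC b hb)).imp And.left And.left
  have h1 : a ∉ C.arcs := fun h => (hres a h).elim ha ha'
  have h2 : a.swap ∉ C.arcs := fun h => (hres _ h).elim ha' (by simpa using ha)
  simp only [if_neg ha, if_neg ha', Cyc.chi, if_neg h1]
  exact (if_neg h2).symm

theorem Feasible.add_chi (hN : ∀ a ∈ N.A, a.swap ∉ N.A) (hf : N.Feasible f)
    (hC : N.IsResCycle f C) (hCp : C.Proper) : N.Feasible (f + N.chi C) := by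
  refine ⟨fun a ha => ?_, fun a ha => by simp [Network.chi, ha, hf.2.1 a ha], fun i => ?_⟩
  · have hcap := hf.1 a ha
    simp only [Pi.add_apply, Network.chi, if_pos ha, Cyc.chi]
    split_ifs with h1 h2
    · rcases mem_resArcs.1 (hC a h1) with ⟨-, hlt⟩ | ⟨hsw, -⟩
      · omega
      · exact absurd hsw (hN a ha)
    · rcases mem_resArcs.1 (hC a.swap h2) with ⟨hsw, -⟩ | ⟨-, hlt⟩
      · exact absurd hsw (hN a ha)
      · rw [Prod.swap_swap] at hlt
        omega
    · omega
  · show netOutflow N.A (f + N.chi C) i = N.b i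
    rw [netOutflow_add, netOutflow_eq_sum_netFlow (g := N.chi C) (fun a ha => if_neg ha),
      netFlow_chi hN hC hCp, Cyc.sum_chi_eq_zero hCp, add_zero]
    exact hf.2.2 i

theorem chi_ne_zero (hN : ∀ a ∈ N.A, a.swap ∉ N.A) (hC : N.IsResCycle f C) (hCp : C.Proper) :
    N.chi C ≠ 0 := by
  intro h0
  obtain ⟨a, ha⟩ := C.arcs_nonempty
  have := congrFun (netFlow_chi hN hC hCp) a
  simp [h0, netFlow, Cyc.chi, ha] at this

end Network

/-- A feasible integer flow `f'` different from `f` exists iff the residual graph `D_f`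
contains a proper directed cycle. -/
theorem exists_other_feasible_iff_proper_cycle (N : Network V) (hN : N.Wellformed)
    (f : V × V → ℤ) (hf : N.Feasible f) :
    (∃ f' : V × V → ℤ, N.Feasible f' ∧ f' ≠ f) ↔
      ∃ C : Cyc V, N.IsResCycle f C ∧ C.Proper := by
  constructor
  · rintro ⟨f', hf', hne⟩
    have hcirc : ∀ i, ∑ j, netFlow (f' - f) (i, j) = 0 := fun i => by
      rw [← netOutflow_eq_sum_netFlow fun a ha => by simp [hf.2.1 a ha, hf'.2.1 a ha],
        netOutflow_sub, sub_eq_zero]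
      exact (hf'.2.2 i).trans (hf.2.2 i).symm
    -- no anti-parallel arcs, so a change of flow on one arc is a nonzero net flow
    obtain ⟨a, ha⟩ := Function.ne_iff.1 hne
    have haA := hf'.mem_of_ne hf ha
    have hnet : netFlow (f' - f) a ≠ 0 := by
      have hsw := hN.1 a haA
      simpa [netFlow, Prod.swap, hf.2.1 _ hsw, hf'.2.1 _ hsw, sub_eq_zero] using ha
    obtain ⟨C, hpos, hCp⟩ := exists_proper_cyc_of_netFlow_ne_zero hcirc ⟨a, hnet⟩
    exact ⟨C, fun b hb => N.mem_resArcs_of_netFlow_pos hf hf' (hpos b hb), hCp⟩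
  · rintro ⟨C, hC, hCp⟩
    refine ⟨f + N.chi C, hf.add_chi hN.1 hC hCp, fun h => N.chi_ne_zero hN.1 hC hCp ?_⟩
    simpa using h
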